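/- Let 𝒰 be a cube partition of ℕ⁺ of order (ℓ₁,...,ℓ_r) in which every partition class has upper density exactly ∏_{i=1}^r(1/ℓᵢ), and let c_𝒰 be the associated cube colouring. Then for every i ∈ {1,...,r}, there is no directed path of length ℓᵢ in colour i. -/

import Mathlib

open scoped Classical

/-- Upper density of a set of positive integers. -/
noncomputable def upperDensity (A : Set ℕ) : ℝ :=
  Filter.limsup
    (fun n : ℕ => (((Finset.Icc 1 n).filter (fun m => m ∈ A)).card : ℝ) / n)
    Filter.atTop

/-- `k` is the least index at which the tuples `a` and `b` differ. -/
def LeastDiff {r : ℕ} {ℓ : Fin r → ℕ} (a b : ∀ i, Fin (ℓ i)) (k : Fin r) : Prop :=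
  a k ≠ b k ∧ ∀ k' : Fin r, k' < k → a k' = b k'

/-- `c` is the cube colouring associated to the cube partition whose classes are
the fibres of `f` (which maps each positive integer to the index of its class in
the cube `∏ i, {0, …, ℓ i - 1}`): edges within a class get colour `r + 1`; for
`m, n` in different classes with least differing index `k`, if the `k`-th
coordinate of `m`'s class is smaller then `(m, n)` gets colour `r + 1` and
`(n, m)` gets colour `k`. -/
def IsCubeColouring {r : ℕ} {ℓ : Fin r → ℕ} (f : ℕ → ∀ i, Fin (ℓ i))
    (c : ℕ → ℕ → Fin (r + 1)) : Prop :=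
  ∀ m n : ℕ, m ≠ n →
    (f m = f n → c m n = Fin.last r) ∧
    ∀ k : Fin r, LeastDiff (f m) (f n) k →
      (f m k < f n k → c m n = Fin.last r) ∧
      (f n k < f m k → c m n = k.castSucc)

/-! Along a path in colour `i` the `i`-th coordinate of the class index strictly decreases,
so such a path visits at most `ℓ i` vertices. -/

variable {r : ℕ} {ℓ : Fin r → ℕ}

theorem exists_leastDiff_of_ne {a b : ∀ i, Fin (ℓ i)} (h : a ≠ b) : ∃ k, LeastDiff a b k := by
  obtain ⟨k, hk, hmin⟩ :=
    WellFounded.has_min wellFounded_lt {k | a k ≠ b k} (Function.ne_iff.mp h)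
  exact ⟨k, hk, fun k' hk' => by_contra fun hne => hmin k' hne hk'⟩

theorem IsCubeColouring.apply_lt_of_colour_eq {f : ℕ → ∀ i, Fin (ℓ i)} {c : ℕ → ℕ → Fin (r + 1)}
    (hc : IsCubeColouring f c) {m n : ℕ} (hmn : m ≠ n) {i : Fin r}
    (hi : c m n = i.castSucc) : f n i < f m i := by
  have hlast : c m n ≠ Fin.last r := hi ▸ (Fin.castSucc_lt_last i).ne
  obtain ⟨k, hk⟩ := exists_leastDiff_of_ne fun h => hlast ((hc m n hmn).1 h)
  obtain ⟨hlt, hgt⟩ := (hc m n hmn).2 k hk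
  rcases lt_or_gt_of_ne hk.1 with h | h
  · exact absurd (hlt h) hlast
  · obtain rfl : k = i := Fin.castSucc_injective r ((hgt h).symm.trans hi)
    exact h

theorem stmt10 (r : ℕ) (ℓ : Fin r → ℕ)
    (f : ℕ → ∀ i, Fin (ℓ i))
    (c : ℕ → ℕ → Fin (r + 1)) (hc : IsCubeColouring f c) :
    ∀ i : Fin r, ¬∃ v : Fin (ℓ i + 1) → ℕ, Function.Injective v ∧
      ∀ j : Fin (ℓ i), c (v j.castSucc) (v j.succ) = i.castSucc := by
  rintro i ⟨v, hinj, hcol⟩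
  have hanti : StrictAnti fun j => f (v j) i := Fin.strictAnti_iff_succ_lt.mpr fun j =>
    hc.apply_lt_of_colour_eq (hinj.ne (Fin.castSucc_lt_succ (i := j)).ne) (hcol j)
  simpa using Fintype.card_le_of_injective _ hanti.injective
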